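/- arXiv:1505.07960 — 4 statements merged into one kernel-verified Lean document; each statement's English description precedes it below -/
import Mathlib

section
/- Let (Ω, Σ, P) be a probability space, N ≥ 1, f : Ω → ℝ^N a random vector with square-integrable components, A an invertible real N×N matrix, B a real N×N matrix, u(ω) = A⁻¹ f(ω), and let the adjoint state p : Ω → ℝ^N be defined by the system Aᵀ p(ω) = −2 Bᵀ u(ω) (i.e. p(ω) = −2 (Aᵀ)⁻¹ Bᵀ u(ω)). Then the cross-correlation matrix Cor(u,p), with entries Cor(u,p)_{ij} = ∫_Ω u_i(ω) p_j(ω) P(dω), satisfies Cor(u,p) · A = −2 · Cor(u) · B. -/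
open MeasureTheory

/-!
Since `p = M u` for the deterministic matrix `M = -2 (Aᵀ)⁻¹ Bᵀ`, linearity of the integral gives
`Cor(u, p) = Cor(u) Mᵀ = -2 Cor(u) B A⁻¹`; multiplying by `A` on the right gives the claim.
The square-integrability of `f` passes to `u = A⁻¹ f` and makes all products `uᵢ uⱼ` integrable.
-/

section CrossCorrelation

open scoped Matrix

variable {Ω : Type*} [MeasurableSpace Ω] {P : Measure Ω} {m n l : Type*}

noncomputable def crossCorr (P : Measure Ω) (v : Ω → m → ℝ) (w : Ω → n → ℝ) : Matrix m n ℝ :=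
  Matrix.of fun i j => ∫ ω, v ω i * w ω j ∂P

variable [Fintype n]

theorem memLp_mulVec_apply {p : ENNReal} {f : Ω → n → ℝ} (hf : ∀ k, MemLp (fun ω => f ω k) p P)
    (M : Matrix m n ℝ) (i : m) : MemLp (fun ω => (M *ᵥ f ω) i) p P :=
  memLp_finsetSum _ fun k _ => (hf k).const_mul (M i k)

theorem crossCorr_mulVec_right {v : Ω → m → ℝ} {w : Ω → n → ℝ}
    (hvw : ∀ i k, Integrable (fun ω => v ω i * w ω k) P) (M : Matrix l n ℝ) :
    crossCorr P v (fun ω => M *ᵥ w ω) = crossCorr P v w * Mᵀ := by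
  ext i j
  have hpoint : ∀ ω, v ω i * (M *ᵥ w ω) j = ∑ k, M j k * (v ω i * w ω k) := fun ω => by
    simp only [Matrix.mulVec, dotProduct, Finset.mul_sum]
    exact Finset.sum_congr rfl fun k _ => by ring
  simp only [crossCorr, Matrix.of_apply, Matrix.mul_apply, Matrix.transpose_apply, hpoint]
  rw [integral_finsetSum _ fun k _ => (hvw i k).const_mul (M j k)]
  exact Finset.sum_congr rfl fun k _ => by rw [integral_const_mul, mul_comm]

end CrossCorrelation

theorem stmt_2_general {Ω : Type*} [MeasurableSpace Ω] (P : Measure Ω)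
    {N : ℕ} (f : Ω → Fin N → ℝ)
    (hf : ∀ i, MemLp (fun ω => f ω i) 2 P)
    (A : Matrix (Fin N) (Fin N) ℝ) (hA : IsUnit A)
    (B : Matrix (Fin N) (Fin N) ℝ)
    (u p : Ω → Fin N → ℝ) (hu : ∀ ω, u ω = A⁻¹.mulVec (f ω))
    (hp : ∀ ω, p ω = (-2 : ℝ) • (A.transpose)⁻¹.mulVec (B.transpose.mulVec (u ω))) :
    (Matrix.of fun i j => ∫ ω, u ω i * p ω j ∂P) * A =
      (-2 : ℝ) • ((Matrix.of fun i j => ∫ ω, u ω i * u ω j ∂P) * B) := by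
  have hu2 : ∀ i, MemLp (fun ω => u ω i) 2 P := fun i => by
    simpa only [hu] using memLp_mulVec_apply hf A⁻¹ i
  have hp_eq : p = fun ω => ((-2 : ℝ) • (A.transpose⁻¹ * B.transpose)).mulVec (u ω) := by
    funext ω
    rw [hp, Matrix.smul_mulVec, Matrix.mulVec_mulVec]
  have hcorr : crossCorr P u p = crossCorr P u u * ((-2 : ℝ) • (B * A⁻¹)) := by
    rw [hp_eq, crossCorr_mulVec_right fun i j => (hu2 i).integrable_mul (hu2 j),
      Matrix.transpose_smul, Matrix.transpose_mul, Matrix.transpose_transpose,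
      ← Matrix.transpose_nonsing_inv, Matrix.transpose_transpose]
  change crossCorr P u p * A = (-2 : ℝ) • (crossCorr P u u * B)
  rw [hcorr, Matrix.mul_smul, Matrix.smul_mul, Matrix.mul_assoc, Matrix.mul_assoc,
    Matrix.nonsing_inv_mul A ((Matrix.isUnit_iff_isUnit_det A).mp hA), Matrix.mul_one]

/-- The cross-correlation matrix `Cor(u,p)` of the state `u` and the adjoint state `p`,
defined by `Aᵀ p = -2 Bᵀ u`, satisfies `Cor(u,p) · A = -2 · Cor(u) · B`. -/
theorem stmt_2 {Ω : Type*} [MeasurableSpace Ω] (P : Measure Ω) [IsProbabilityMeasure P]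
    {N : ℕ} (hN : 1 ≤ N) (f : Ω → Fin N → ℝ)
    (hf : ∀ i, MemLp (fun ω => f ω i) 2 P)
    (A : Matrix (Fin N) (Fin N) ℝ) (hA : IsUnit A)
    (B : Matrix (Fin N) (Fin N) ℝ)
    (u p : Ω → Fin N → ℝ) (hu : ∀ ω, u ω = A⁻¹.mulVec (f ω))
    (hp : ∀ ω, p ω = (-2 : ℝ) • (A.transpose)⁻¹.mulVec (B.transpose.mulVec (u ω))) :
    (Matrix.of fun i j => ∫ ω, u ω i * p ω j ∂P) * A =
      (-2 : ℝ) • ((Matrix.of fun i j => ∫ ω, u ω i * u ω j ∂P) * B) :=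
  stmt_2_general P f hf A hA B u p hu hp
end

section
/- Let (X, μ) and (Y, ν) be σ-finite measure spaces such that L²(X, μ; ℝ) and L²(Y, ν; ℝ) are separable. If (φ_i)_{i ∈ I} is a Hilbert (orthonormal) basis of L²(X, μ; ℝ) and (ψ_j)_{j ∈ J} is a Hilbert basis of L²(Y, ν; ℝ), then the family of functions ((x,y) ↦ φ_i(x) ψ_j(y))_{(i,j) ∈ I × J} is a Hilbert basis of L²(X × Y, μ ⊗ ν; ℝ). -/
open MeasureTheory
open scoped RealInnerProductSpace

/-! Orthonormality is Fubini: `⟪φ i ⊗ ψ j, φ k ⊗ ψ l⟫ = ⟪φ i, φ k⟫ ⟪ψ j, ψ l⟫`. For completeness,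
let `F` be orthogonal to every `φ i ⊗ ψ j`. For each `j`, Cauchy–Schwarz on the slices puts the
partial coefficient `x ↦ ∫ ψ j y * F (x, y) dν` in `L²(μ)`, and Fubini makes it orthogonal to every
`φ i`, so it vanishes a.e. Since `L²(ν)` is separable, `J` is countable, so for a.e. `x` the slice
`F (x, ·)` is orthogonal to every `ψ j` at once, hence zero; thus `F = 0`. -/

-- Distinct vectors of an orthonormal family are `√2` apart.
theorem Orthonormal.countable {E ι : Type*} [NormedAddCommGroup E] [InnerProductSpace ℝ E]
    [TopologicalSpace.SeparableSpace E] {v : ι → E} (hv : Orthonormal ℝ v) : Countable ι := by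
  refine Pairwise.countable_of_isOpen_disjoint (s := fun i => Metric.ball (v i) (1 / 2))
    (fun i j hij => Metric.ball_disjoint_ball ?_) (fun _ => Metric.isOpen_ball)
    (fun _ => Metric.nonempty_ball.2 (by norm_num))
  have hsq : ‖v i - v j‖ ^ 2 = 2 := by
    rw [norm_sub_sq_real, hv.1 i, hv.1 j, hv.2 hij]
    norm_num
  rw [dist_eq_norm]
  nlinarith [norm_nonneg (v i - v j)]

namespace MeasureTheory

section L2

variable {α : Type*} [MeasurableSpace α] {μ : Measure α}

theorem L2.real_inner_eq_integral (f g : Lp ℝ 2 μ) : ⟪f, g⟫ = ∫ a, f a * g a ∂μ := by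
  simp [L2.inner_def, mul_comm]

theorem MemLp.real_inner_toLp {f g : α → ℝ} (hf : MemLp f 2 μ) (hg : MemLp g 2 μ) :
    ⟪hf.toLp f, hg.toLp g⟫ = ∫ a, f a * g a ∂μ := by
  rw [L2.real_inner_eq_integral]
  refine integral_congr_ae ?_
  filter_upwards [hf.coeFn_toLp, hg.coeFn_toLp] with a hfa hga
  rw [hfa, hga]

theorem MemLp.sq_integral_mul_le {f g : α → ℝ} (hf : MemLp f 2 μ) (hg : MemLp g 2 μ) :
    (∫ a, f a * g a ∂μ) ^ 2 ≤ (∫ a, f a ^ 2 ∂μ) * ∫ a, g a ^ 2 ∂μ := by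
  simpa only [← hf.real_inner_toLp hg, ← hf.real_inner_toLp hf, ← hg.real_inner_toLp hg, sq]
    using real_inner_mul_inner_self_le (hf.toLp f) (hg.toLp g)

theorem HilbertBasis.ae_eq_zero_of_forall_integral_mul_eq_zero {ι : Type*}
    (b : HilbertBasis ι ℝ (Lp ℝ 2 μ)) {g : α → ℝ} (hg : MemLp g 2 μ)
    (h : ∀ i, ∫ a, b i a * g a ∂μ = 0) : g =ᵐ[μ] 0 := by
  have horth : ∀ i, ⟪b i, hg.toLp g⟫ = 0 := fun i => by
    rw [← h i, L2.real_inner_eq_integral]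
    refine integral_congr_ae ?_
    filter_upwards [hg.coeFn_toLp] with a ha
    rw [ha]
  have hzero : hg.toLp g = 0 :=
    b.repr.map_eq_zero_iff.1 (lp.ext (funext fun i => by simpa [b.repr_apply_apply] using horth i))
  exact hg.coeFn_toLp.symm.trans (Lp.eq_zero_iff_ae_eq_zero.1 hzero)

end L2

section Prod

variable {X Y : Type*} [MeasurableSpace X] [MeasurableSpace Y] {μ : Measure X} {ν : Measure Y}

theorem AEStronglyMeasurable.ae_eq_of_ae_ae_eq [SFinite ν] {E : Type*} [TopologicalSpace E]
    [TopologicalSpace.MetrizableSpace E] {f g : X × Y → E} (hf : AEStronglyMeasurable f (μ.prod ν))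
    (hg : AEStronglyMeasurable g (μ.prod ν))
    (h : ∀ᵐ x ∂μ, (fun y => f (x, y)) =ᵐ[ν] fun y => g (x, y)) : f =ᵐ[μ.prod ν] g := by
  have hmk : hf.mk f =ᵐ[μ.prod ν] hg.mk g := by
    refine (Measure.ae_prod_iff_ae_ae
      (hf.stronglyMeasurable_mk.measurableSet_eq_fun hg.stronglyMeasurable_mk)).2 ?_
    filter_upwards [h, Measure.ae_ae_of_ae_prod hf.ae_eq_mk,
      Measure.ae_ae_of_ae_prod hg.ae_eq_mk] with x hx hfx hgx
    filter_upwards [hx, hfx, hgx] with y hxy hfxy hgxy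
    rw [← hfxy, ← hgxy, hxy]
  exact hf.ae_eq_mk.trans (hmk.trans hg.ae_eq_mk.symm)

theorem MemLp.mul_prod [SFinite ν] {f : X → ℝ} {g : Y → ℝ} (hf : MemLp f 2 μ) (hg : MemLp g 2 ν) :
    MemLp (fun p : X × Y => f p.1 * g p.2) 2 (μ.prod ν) := by
  refine (memLp_two_iff_integrable_sq (hf.1.comp_fst.mul hg.1.comp_snd)).2 ?_
  simpa only [Pi.mul_apply, mul_pow] using hf.integrable_sq.mul_prod hg.integrable_sq

theorem MemLp.ae_memLp_prodMk_left [SFinite μ] [SFinite ν] {f : X × Y → ℝ}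
    (hf : MemLp f 2 (μ.prod ν)) :
    ∀ᵐ x ∂μ, MemLp (fun y => f (x, y)) 2 ν := by
  filter_upwards [hf.1.prodMk_left, hf.integrable_sq.prod_right_ae] with x hmeas hsq
  exact (memLp_two_iff_integrable_sq hmeas).2 hsq

theorem MemLp.integral_mul_prodMk_left [SFinite μ] [SFinite ν] {f : X × Y → ℝ} {v : Y → ℝ}
    (hf : MemLp f 2 (μ.prod ν)) (hv : MemLp v 2 ν) :
    MemLp (fun x => ∫ y, v y * f (x, y) ∂ν) 2 μ := by
  have hmeas : AEStronglyMeasurable (fun x => ∫ y, v y * f (x, y) ∂ν) μ :=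
    (hv.1.comp_snd.mul hf.1).integral_prod_right'
  refine (memLp_two_iff_integrable_sq hmeas).2
    ((hf.integrable_sq.integral_prod_left.const_mul (∫ y, v y ^ 2 ∂ν)).mono' (hmeas.pow 2) ?_)
  filter_upwards [hf.ae_memLp_prodMk_left] with x hx
  rw [Real.norm_of_nonneg (sq_nonneg _)]
  exact hv.sq_integral_mul_le hx

theorem MemLp.integral_prod_mul_mul [SFinite μ] [SFinite ν] {u : X → ℝ} {v : Y → ℝ}
    {f : X × Y → ℝ} (hu : MemLp u 2 μ) (hv : MemLp v 2 ν) (hf : MemLp f 2 (μ.prod ν)) :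
    ∫ z, u z.1 * v z.2 * f z ∂(μ.prod ν) = ∫ x, u x * ∫ y, v y * f (x, y) ∂ν ∂μ := by
  rw [integral_prod (fun z => u z.1 * v z.2 * f z) ((hu.mul_prod hv).integrable_mul hf)]
  simp_rw [mul_assoc, integral_const_mul]

theorem HilbertBasis.ae_eq_zero_of_forall_integral_mul_mul_eq_zero [SFinite μ] [SFinite ν]
    {I J : Type*} [Countable J] (φ : HilbertBasis I ℝ (Lp ℝ 2 μ))
    (ψ : HilbertBasis J ℝ (Lp ℝ 2 ν)) {f : X × Y → ℝ} (hf : MemLp f 2 (μ.prod ν))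
    (h : ∀ i j, ∫ z, φ i z.1 * ψ j z.2 * f z ∂(μ.prod ν) = 0) : f =ᵐ[μ.prod ν] 0 := by
  have hcoeff : ∀ j, ∀ᵐ x ∂μ, ∫ y, ψ j y * f (x, y) ∂ν = 0 := fun j =>
    φ.ae_eq_zero_of_forall_integral_mul_eq_zero (hf.integral_mul_prodMk_left (Lp.memLp (ψ j)))
      fun i => by rw [← h i j, (Lp.memLp _).integral_prod_mul_mul (Lp.memLp _) hf]
  refine hf.1.ae_eq_of_ae_ae_eq aestronglyMeasurable_const ?_
  filter_upwards [hf.ae_memLp_prodMk_left, ae_all_iff.2 hcoeff] with x hx hx0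
  exact ψ.ae_eq_zero_of_forall_integral_mul_eq_zero hx hx0

end Prod

namespace L2

variable {X Y : Type*} [MeasurableSpace X] [MeasurableSpace Y] {μ : Measure X} {ν : Measure Y}
  [SFinite ν]

noncomputable def tensor (f : Lp ℝ 2 μ) (g : Lp ℝ 2 ν) : Lp ℝ 2 (μ.prod ν) :=
  ((Lp.memLp f).mul_prod (Lp.memLp g)).toLp _

theorem coeFn_tensor (f : Lp ℝ 2 μ) (g : Lp ℝ 2 ν) :
    ⇑(tensor f g) =ᵐ[μ.prod ν] fun p => f p.1 * g p.2 :=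
  MemLp.coeFn_toLp _

theorem inner_tensor_left (f : Lp ℝ 2 μ) (g : Lp ℝ 2 ν) (F : Lp ℝ 2 (μ.prod ν)) :
    ⟪tensor f g, F⟫ = ∫ z, f z.1 * g z.2 * F z ∂(μ.prod ν) := by
  rw [real_inner_eq_integral]
  refine integral_congr_ae ?_
  filter_upwards [coeFn_tensor f g] with z hz
  rw [hz]

theorem inner_tensor_tensor [SFinite μ] (f f' : Lp ℝ 2 μ) (g g' : Lp ℝ 2 ν) :
    ⟪tensor f g, tensor f' g'⟫ = ⟪f, f'⟫ * ⟪g, g'⟫ := by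
  rw [inner_tensor_left, real_inner_eq_integral, real_inner_eq_integral, ← integral_prod_mul]
  refine integral_congr_ae ?_
  filter_upwards [coeFn_tensor f' g'] with z hz
  rw [hz]
  ring

end L2

theorem Orthonormal.tensor {X Y : Type*} [MeasurableSpace X] [MeasurableSpace Y] {μ : Measure X}
    {ν : Measure Y} [SFinite μ] [SFinite ν] {I J : Type*} {u : I → Lp ℝ 2 μ}
    {v : J → Lp ℝ 2 ν} (hu : Orthonormal ℝ u) (hv : Orthonormal ℝ v) :
    Orthonormal ℝ fun ij : I × J => L2.tensor (u ij.1) (v ij.2) := by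
  classical
  rw [orthonormal_iff_ite] at hu hv ⊢
  intro ij kl
  simp only [L2.inner_tensor_tensor, hu, hv, ite_zero_mul_ite_zero, one_mul, Prod.ext_iff]

end MeasureTheory

open MeasureTheory

theorem stmt_4_general {X Y : Type*} [MeasurableSpace X] [MeasurableSpace Y]
    (μ : Measure X) (ν : Measure Y) [SigmaFinite μ] [SigmaFinite ν]
    [TopologicalSpace.SeparableSpace (Lp ℝ 2 ν)]
    {I J : Type*} (φ : HilbertBasis I ℝ (Lp ℝ 2 μ)) (ψ : HilbertBasis J ℝ (Lp ℝ 2 ν)) :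
    ∃ B : I × J → Lp ℝ 2 (μ.prod ν),
      (∀ ij : I × J, ⇑(B ij) =ᵐ[μ.prod ν] fun p => φ ij.1 p.1 * ψ ij.2 p.2) ∧
      Orthonormal ℝ B ∧
      (Submodule.span ℝ (Set.range B)).topologicalClosure = ⊤ := by
  have : Countable J := ψ.orthonormal.countable
  refine ⟨fun ij => L2.tensor (φ ij.1) (ψ ij.2), fun ij => L2.coeFn_tensor _ _,
    φ.orthonormal.tensor ψ.orthonormal, ?_⟩
  rw [Submodule.topologicalClosure_eq_top_iff, Submodule.eq_bot_iff]
  intro F hF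
  refine Lp.eq_zero_iff_ae_eq_zero.2 (φ.ae_eq_zero_of_forall_integral_mul_mul_eq_zero ψ
    (Lp.memLp F) fun i j => ?_)
  rw [← L2.inner_tensor_left]
  exact Submodule.inner_right_of_mem_orthogonal
    (Submodule.subset_span (Set.mem_range_self (i, j))) hF

/-- Tensor products of Hilbert bases of `L²(μ)` and `L²(ν)` form a Hilbert basis
(a complete orthonormal family) of `L²(μ ⊗ ν)`. -/
theorem stmt_4 {X Y : Type*} [MeasurableSpace X] [MeasurableSpace Y]
    (μ : Measure X) (ν : Measure Y) [SigmaFinite μ] [SigmaFinite ν]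
    [TopologicalSpace.SeparableSpace (Lp ℝ 2 μ)]
    [TopologicalSpace.SeparableSpace (Lp ℝ 2 ν)]
    {I J : Type*} (φ : HilbertBasis I ℝ (Lp ℝ 2 μ)) (ψ : HilbertBasis J ℝ (Lp ℝ 2 ν)) :
    ∃ B : I × J → Lp ℝ 2 (μ.prod ν),
      (∀ ij : I × J, ⇑(B ij) =ᵐ[μ.prod ν] fun p => φ ij.1 p.1 * ψ ij.2 p.2) ∧
      Orthonormal ℝ B ∧
      (Submodule.span ℝ (Set.range B)).topologicalClosure = ⊤ :=
  stmt_4_general μ ν φ ψ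
end

section
/- Let (X, μ) and (Y, ν) be σ-finite measure spaces such that L²(X, μ; ℝ) and L²(Y, ν; ℝ) are separable, and let (ψ_j)_{j ∈ J} be a Hilbert basis of L²(Y, ν; ℝ). Then for every h ∈ L²(X × Y, μ ⊗ ν; ℝ) there exists a unique family (u_j)_{j ∈ J} of elements of L²(X, μ; ℝ) with Σ_{j ∈ J} ‖u_j‖²_{L²(μ)} < ∞ such that h = Σ_{j ∈ J} u_j ⊗ ψ_j, the series converging unconditionally in L²(μ ⊗ ν). -/
/-!
Tensoring with a fixed unit vector `ψ j` is an isometry `u ↦ u ⊗ ψ j` of `L²(μ)` into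
`L²(μ ⊗ ν)`, and `⟪u ⊗ v, u' ⊗ v'⟫ = ⟪u, u'⟫ ⟪v, v'⟫` makes these isometries mutually orthogonal.
Their ranges are total: if `f ⊥ u ⊗ ψ j` for all `u, j`, then `f ⊥ u ⊗ v` for all `v` by
expanding `v` in the basis, in particular `∫_{s × t} f = 0` for all rectangles of finite measure,
and a π-λ argument on σ-finite pieces gives `f = 0`. So `L²(μ ⊗ ν)` is the Hilbert sum of copies
of `L²(μ)`, and the expansion is the coordinate map `L²(μ ⊗ ν) ≃ ℓ²(J, L²(μ))`.
-/

open MeasureTheory ENNReal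

noncomputable section

namespace MeasureTheory

variable {X Y : Type*} [MeasurableSpace X] [MeasurableSpace Y]

theorem Integrable.ae_eq_zero_of_forall_setIntegral_prod_eq_zero {E : Type*}
    [NormedAddCommGroup E] [NormedSpace ℝ E] [CompleteSpace E] {ρ : Measure (X × Y)}
    {f : X × Y → E} (hf : Integrable f ρ)
    (h : ∀ ⦃s : Set X⦄, MeasurableSet s → ∀ ⦃t : Set Y⦄, MeasurableSet t →
      ∫ z in s ×ˢ t, f z ∂ρ = 0) :
    f =ᵐ[ρ] 0 := by
  suffices ∀ A, MeasurableSet A → ∫ z in A, f z ∂ρ = 0 from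
    hf.ae_eq_zero_of_forall_setIntegral_eq_zero fun A hA _ => this A hA
  intro A hA
  induction A, hA using MeasurableSpace.induction_on_inter generateFrom_prod.symm
    isPiSystem_prod with
  | empty => simp
  | basic A hA =>
    obtain ⟨s, hs, t, ht, rfl⟩ := hA
    exact h hs ht
  | compl A hA ih =>
    have huniv : ∫ z, f z ∂ρ = 0 := by simpa using h .univ .univ
    simpa [ih, huniv] using integral_add_compl hA hf
  | iUnion A hdisj hA ih => simp [integral_iUnion hA hdisj hf.integrableOn, ih]

variable {μ : Measure X} {ν : Measure Y}

theorem iUnion_spanningSets_prod_spanningSets (μ : Measure X) (ν : Measure Y) [SigmaFinite μ]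
    [SigmaFinite ν] :
    ⋃ n, spanningSets μ n ×ˢ spanningSets ν n = Set.univ := by
  rw [Set.iUnion_prod_of_monotone (monotone_spanningSets μ) (monotone_spanningSets ν),
    iUnion_spanningSets, iUnion_spanningSets, Set.univ_prod_univ]

theorem MemLp.ae_eq_zero_of_forall_setIntegral_prod_eq_zero [SigmaFinite μ] [SigmaFinite ν]
    {E : Type*} [NormedAddCommGroup E] [NormedSpace ℝ E] [CompleteSpace E] {p : ℝ≥0∞}
    (hp : 1 ≤ p) {f : X × Y → E} (hf : MemLp f p (μ.prod ν))
    (h : ∀ ⦃s : Set X⦄, MeasurableSet s → μ s ≠ ∞ → ∀ ⦃t : Set Y⦄, MeasurableSet t → ν t ≠ ∞ →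
      ∫ z in s ×ˢ t, f z ∂μ.prod ν = 0) :
    f =ᵐ[μ.prod ν] 0 := by
  rw [← (μ.prod ν).restrict_univ, ← iUnion_spanningSets_prod_spanningSets μ ν]
  refine (ae_restrict_iUnion_iff _ _).2 fun n => ?_
  have : IsFiniteMeasure ((μ.prod ν).restrict (spanningSets μ n ×ˢ spanningSets ν n)) :=
    isFiniteMeasure_restrict.2 (by
      rw [Measure.prod_prod]
      exact mul_ne_top (measure_spanningSets_lt_top μ n).ne (measure_spanningSets_lt_top ν n).ne)
  refine ((hf.restrict _).integrable hp).ae_eq_zero_of_forall_setIntegral_prod_eq_zero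
    fun s hs t ht => ?_
  rw [Measure.restrict_restrict (hs.prod ht), Set.prod_inter_prod]
  exact h (hs.inter (measurableSet_spanningSets μ n))
    (measure_inter_lt_top_of_right_ne_top (measure_spanningSets_lt_top μ n).ne).ne
    (ht.inter (measurableSet_spanningSets ν n))
    (measure_inter_lt_top_of_right_ne_top (measure_spanningSets_lt_top ν n).ne).ne

variable {𝕜 : Type*} [RCLike 𝕜]

section SFinite

variable [SFinite ν]

theorem eLpNorm_prod_mul {p : ℝ≥0∞} (hp : p ≠ ∞) {f : X → 𝕜} {g : Y → 𝕜}
    (hf : AEStronglyMeasurable f μ) (hg : AEStronglyMeasurable g ν) :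
    eLpNorm (fun z => f z.1 * g z.2) p (μ.prod ν) = eLpNorm f p μ * eLpNorm g p ν := by
  rcases eq_or_ne p 0 with rfl | hp0
  · simp
  simp_rw [eLpNorm_eq_lintegral_rpow_enorm_toReal hp0 hp, enorm_mul,
    ENNReal.mul_rpow_of_nonneg _ _ toReal_nonneg]
  rw [lintegral_prod_mul (hf.enorm.pow_const _) (hg.enorm.pow_const _),
    ENNReal.mul_rpow_of_nonneg _ _ (by positivity)]

theorem MemLp.prod_mul {p : ℝ≥0∞} (hp : p ≠ ∞) {f : X → 𝕜} {g : Y → 𝕜}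
    (hf : MemLp f p μ) (hg : MemLp g p ν) :
    MemLp (fun z => f z.1 * g z.2) p (μ.prod ν) :=
  ⟨hf.1.comp_fst.mul hg.1.comp_snd, by
    rw [eLpNorm_prod_mul hp hf.1 hg.1]
    exact mul_lt_top hf.2 hg.2⟩

namespace L2

def prodMul (u : Lp 𝕜 2 μ) (v : Lp 𝕜 2 ν) : Lp 𝕜 2 (μ.prod ν) :=
  ((Lp.memLp u).prod_mul ofNat_ne_top (Lp.memLp v)).toLp _

theorem coeFn_prodMul (u : Lp 𝕜 2 μ) (v : Lp 𝕜 2 ν) :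
    prodMul u v =ᵐ[μ.prod ν] fun z => u z.1 * v z.2 :=
  MemLp.coeFn_toLp _

theorem norm_prodMul (u : Lp 𝕜 2 μ) (v : Lp 𝕜 2 ν) : ‖prodMul u v‖ = ‖u‖ * ‖v‖ := by
  rw [Lp.norm_def, eLpNorm_congr_ae (coeFn_prodMul u v),
    eLpNorm_prod_mul ofNat_ne_top (Lp.aestronglyMeasurable u) (Lp.aestronglyMeasurable v),
    toReal_mul, Lp.norm_def, Lp.norm_def]

theorem inner_prodMul [SFinite μ] (u u' : Lp 𝕜 2 μ) (v v' : Lp 𝕜 2 ν) :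
    inner 𝕜 (prodMul u v) (prodMul u' v') = inner 𝕜 u u' * inner 𝕜 v v' := by
  rw [L2.inner_def, L2.inner_def, L2.inner_def, ← integral_prod_mul]
  refine integral_congr_ae ?_
  filter_upwards [coeFn_prodMul u v, coeFn_prodMul u' v'] with z h h'
  simp only [h, h', RCLike.inner_apply, map_mul]
  ring

theorem prodMul_add_left (u u' : Lp 𝕜 2 μ) (v : Lp 𝕜 2 ν) :
    prodMul (u + u') v = prodMul u v + prodMul u' v := by
  refine Lp.ext ?_
  filter_upwards [coeFn_prodMul (u + u') v, coeFn_prodMul u v, coeFn_prodMul u' v,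
    Lp.coeFn_add (prodMul u v) (prodMul u' v),
    Measure.quasiMeasurePreserving_fst.ae_eq_comp (Lp.coeFn_add u u')] with z h h₁ h₂ h₃ h₄
  simp_all [add_mul]

theorem prodMul_smul_left (c : 𝕜) (u : Lp 𝕜 2 μ) (v : Lp 𝕜 2 ν) :
    prodMul (c • u) v = c • prodMul u v := by
  refine Lp.ext ?_
  filter_upwards [coeFn_prodMul (c • u) v, coeFn_prodMul u v, Lp.coeFn_smul c (prodMul u v),
    Measure.quasiMeasurePreserving_fst.ae_eq_comp (Lp.coeFn_smul c u)] with z h h₁ h₂ h₃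
  simp_all [mul_assoc]

theorem prodMul_add_right (u : Lp 𝕜 2 μ) (v v' : Lp 𝕜 2 ν) :
    prodMul u (v + v') = prodMul u v + prodMul u v' := by
  refine Lp.ext ?_
  filter_upwards [coeFn_prodMul u (v + v'), coeFn_prodMul u v, coeFn_prodMul u v',
    Lp.coeFn_add (prodMul u v) (prodMul u v'),
    Measure.quasiMeasurePreserving_snd.ae_eq_comp (Lp.coeFn_add v v')] with z h h₁ h₂ h₃ h₄
  simp_all [mul_add]

theorem prodMul_smul_right (c : 𝕜) (u : Lp 𝕜 2 μ) (v : Lp 𝕜 2 ν) :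
    prodMul u (c • v) = c • prodMul u v := by
  refine Lp.ext ?_
  filter_upwards [coeFn_prodMul u (c • v), coeFn_prodMul u v, Lp.coeFn_smul c (prodMul u v),
    Measure.quasiMeasurePreserving_snd.ae_eq_comp (Lp.coeFn_smul c v)] with z h h₁ h₂ h₃
  simp_all [mul_left_comm]

def prodMulL : Lp 𝕜 2 μ →L[𝕜] Lp 𝕜 2 ν →L[𝕜] Lp 𝕜 2 (μ.prod ν) :=
  (LinearMap.mk₂ 𝕜 (prodMul (𝕜 := 𝕜) (μ := μ) (ν := ν)) prodMul_add_left prodMul_smul_left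
    prodMul_add_right prodMul_smul_right).mkContinuous₂ 1 fun u v => by
      rw [one_mul]
      exact (norm_prodMul u v).le

theorem prodMulL_apply (u : Lp 𝕜 2 μ) (v : Lp 𝕜 2 ν) : prodMulL u v = prodMul u v := rfl

theorem prodMul_indicatorConstLp_one {s : Set X} {t : Set Y} (hs : MeasurableSet s)
    (ht : MeasurableSet t) (hμs : μ s ≠ ∞) (hνt : ν t ≠ ∞) :
    prodMul (indicatorConstLp 2 hs hμs (1 : 𝕜)) (indicatorConstLp 2 ht hνt (1 : 𝕜)) =
      indicatorConstLp 2 (hs.prod ht) (by rw [Measure.prod_prod]; exact mul_ne_top hμs hνt)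
        (1 : 𝕜) := by
  refine Lp.ext <| (coeFn_prodMul _ _).trans <|
    Filter.EventuallyEq.trans ?_ indicatorConstLp_coeFn.symm
  filter_upwards [Measure.quasiMeasurePreserving_fst.ae_eq_comp (indicatorConstLp_coeFn (p := 2)
      (hs := hs) (hμs := hμs) (c := (1 : 𝕜))),
    Measure.quasiMeasurePreserving_snd.ae_eq_comp (indicatorConstLp_coeFn (p := 2)
      (hs := ht) (hμs := hνt) (c := (1 : 𝕜)))] with z h₁ h₂
  simp only [Function.comp_apply] at h₁ h₂
  rw [h₁, h₂, ← Pi.one_def, ← Pi.one_def, ← Pi.one_def, Set.indicator_prod_one]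

def prodMulRightₗᵢ (v : Lp 𝕜 2 ν) (hv : ‖v‖ = 1) : Lp 𝕜 2 μ →ₗᵢ[𝕜] Lp 𝕜 2 (μ.prod ν) where
  toLinearMap := (prodMulL.flip v).toLinearMap
  norm_map' u := by simp [prodMulL_apply, norm_prodMul, hv]

end L2

end SFinite

namespace L2

theorem eq_zero_of_forall_inner_prodMul_eq_zero [SigmaFinite μ] [SigmaFinite ν]
    (f : Lp 𝕜 2 (μ.prod ν)) (hf : ∀ u v, inner 𝕜 (prodMul u v) f = 0) : f = 0 := by
  refine Lp.eq_zero_iff_ae_eq_zero.2 <|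
    (Lp.memLp f).ae_eq_zero_of_forall_setIntegral_prod_eq_zero one_le_two
      fun s hs hμs t ht hνt => ?_
  have h := hf (indicatorConstLp 2 hs hμs 1) (indicatorConstLp 2 ht hνt 1)
  rwa [prodMul_indicatorConstLp_one, L2.inner_indicatorConstLp_one] at h

theorem isHilbertSum_prodMulRightₗᵢ [SigmaFinite μ] [SigmaFinite ν] {J : Type*}
    (ψ : HilbertBasis J 𝕜 (Lp 𝕜 2 ν)) :
    IsHilbertSum 𝕜 (fun _ : J => Lp 𝕜 2 μ)
      fun j => prodMulRightₗᵢ (ψ j) (ψ.orthonormal.1 j) := by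
  refine IsHilbertSum.mk (fun i j hij u u' => ?_) ?_
  · simp [prodMulRightₗᵢ, prodMulL_apply, inner_prodMul, ψ.orthonormal.2 hij]
  rw [top_le_iff, Submodule.topologicalClosure_eq_top_iff, Submodule.eq_bot_iff]
  intro f hf
  refine eq_zero_of_forall_inner_prodMul_eq_zero f fun u v => inner_eq_zero_symm.1 ?_
  have hψ : (innerSL 𝕜 f).comp (prodMulL u) = 0 := by
    refine ContinuousLinearMap.ext_on (s := Set.range ψ)
      (Submodule.dense_iff_topologicalClosure_eq_top.2 ψ.dense_span) ?_
    rintro _ ⟨j, rfl⟩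
    exact inner_eq_zero_symm.1 <| hf _ <|
      Submodule.mem_iSup_of_mem j (LinearMap.mem_range_self _ u)
  exact congr($hψ v)

end L2

end MeasureTheory

theorem IsHilbertSum.existsUnique_hasSum {𝕜 ι E : Type*} [RCLike 𝕜] [NormedAddCommGroup E]
    [InnerProductSpace 𝕜 E] [CompleteSpace E] {G : ι → Type*} [∀ i, NormedAddCommGroup (G i)]
    [∀ i, InnerProductSpace 𝕜 (G i)] {V : ∀ i, G i →ₗᵢ[𝕜] E} (hV : IsHilbertSum 𝕜 G V) (x : E) :
    ∃! w : ∀ i, G i, HasSum (fun i => V i (w i)) x := by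
  refine ⟨hV.linearIsometryEquiv x, by
    simpa using hV.hasSum_linearIsometryEquiv_symm (hV.linearIsometryEquiv x), fun w hw => ?_⟩
  have hw₂ : Memℓp w 2 := (memℓp_gen_iff (by norm_num)).2 <| by
    simpa using (hV.OrthogonalFamily.summable_iff_norm_sq_summable w).1 hw.summable
  have hx : hV.linearIsometryEquiv.symm ⟨w, hw₂⟩ = x :=
    (hV.hasSum_linearIsometryEquiv_symm _).unique hw
  rw [← hx, LinearIsometryEquiv.apply_symm_apply]

theorem stmt_5_general {X Y : Type*} [MeasurableSpace X] [MeasurableSpace Y]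
    (μ : Measure X) (ν : Measure Y) [SigmaFinite μ] [SigmaFinite ν]
    {J : Type*} (ψ : HilbertBasis J ℝ (Lp ℝ 2 ν))
    (h : Lp ℝ 2 (μ.prod ν)) :
    ∃! U : J → Lp ℝ 2 μ,
      (Summable fun j => ‖U j‖ ^ 2) ∧
      ∃ T : J → Lp ℝ 2 (μ.prod ν),
        (∀ j, ⇑(T j) =ᵐ[μ.prod ν] fun p => U j p.1 * ψ j p.2) ∧ HasSum T h := by
  have hV := L2.isHilbertSum_prodMulRightₗᵢ (μ := μ) ψ
  refine (existsUnique_congr fun U => ⟨?_, fun hU => ?_⟩).2 (hV.existsUnique_hasSum h)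
  · rintro ⟨-, T, hT, hTh⟩
    convert hTh with j
    exact Lp.ext ((L2.coeFn_prodMul _ _).trans (hT j).symm)
  · exact ⟨(hV.OrthogonalFamily.summable_iff_norm_sq_summable U).1 hU.summable, _,
      fun j => L2.coeFn_prodMul _ _, hU⟩

/-- Every `h ∈ L²(μ ⊗ ν)` has a unique expansion `h = Σ_j u_j ⊗ ψ_j` along a Hilbert
basis `(ψ_j)` of `L²(ν)`, with `Σ_j ‖u_j‖² < ∞` and unconditional convergence. -/
theorem stmt_5 {X Y : Type*} [MeasurableSpace X] [MeasurableSpace Y]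
    (μ : Measure X) (ν : Measure Y) [SigmaFinite μ] [SigmaFinite ν]
    [TopologicalSpace.SeparableSpace (Lp ℝ 2 μ)]
    [TopologicalSpace.SeparableSpace (Lp ℝ 2 ν)]
    {J : Type*} (ψ : HilbertBasis J ℝ (Lp ℝ 2 ν))
    (h : Lp ℝ 2 (μ.prod ν)) :
    ∃! U : J → Lp ℝ 2 μ,
      (Summable fun j => ‖U j‖ ^ 2) ∧
      ∃ T : J → Lp ℝ 2 (μ.prod ν),
        (∀ j, ⇑(T j) =ᵐ[μ.prod ν] fun p => U j p.1 * ψ j p.2) ∧ HasSum T h :=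
  stmt_5_general μ ν ψ h
end
end

section
/- Let (D, λ) be a σ-finite measure space, n ≥ 1, and let u₁, …, u_n, v₁, …, v_n ∈ L²(D, λ; ℝ). If Σ_{i=1}^n u_i(x) v_i(y) = 0 for λ ⊗ λ-almost every (x,y) ∈ D × D, then Σ_{i=1}^n u_i(x) v_i(x) = 0 for λ-almost every x ∈ D. -/
/-! The coefficient vectors `c` with `∑ i, c i * v i = 0` a.e. form a subspace `K` of `ℝⁿ`, and
Fubini puts `(u i x)ᵢ` in `K` for a.e. `x`. As `K` is finitely generated, a.e. `y` satisfies
`∑ i, c i * v i y = 0` for all `c ∈ K` at once, so one may take `y = x`. -/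

open MeasureTheory

theorem Filter.eventually_forall_apply_eq_zero_of_eventuallyEq_zero {R E α M : Type*} [Semiring R]
    [AddCommMonoid E] [Module R E] [IsNoetherian R E] [AddCommMonoid M] [Module R M]
    (l : Filter α) (L : E →ₗ[R] α → M) :
    ∀ᶠ y in l, ∀ c, L c =ᶠ[l] 0 → L c y = 0 := by
  let K : Submodule R E :=
    { carrier := {c | L c =ᶠ[l] 0}
      add_mem' := fun ha hb => by simpa using ha.add hb
      zero_mem' := by simp
      smul_mem' := fun r _ hc => by simpa using hc.const_smul r }
  obtain ⟨S, hS⟩ := IsNoetherian.noetherian K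
  have hS_zero : ∀ᶠ y in l, ∀ s ∈ S, L s y = 0 :=
    Filter.eventually_all_finset S |>.2 fun s hs => (hS ▸ Submodule.subset_span hs : s ∈ K)
  filter_upwards [hS_zero] with y hy c hc
  have hK : K ≤ LinearMap.ker ((LinearMap.proj y).comp L) := hS ▸ Submodule.span_le.2 hy
  exact hK hc

theorem stmt_11_general {D : Type*} [MeasurableSpace D] (lam : Measure D) [SigmaFinite lam]
    {n : ℕ} (u v : Fin n → D → ℝ)
    (h : ∀ᵐ q ∂(lam.prod lam), ∑ i : Fin n, u i q.1 * v i q.2 = 0) :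
    ∀ᵐ x ∂lam, ∑ i : Fin n, u i x * v i x = 0 := by
  filter_upwards [Measure.ae_ae_of_ae_prod h,
    (ae lam).eventually_forall_apply_eq_zero_of_eventuallyEq_zero (Fintype.linearCombination ℝ v)]
    with x hx hzero
  have hux : Fintype.linearCombination ℝ v (fun i => u i x) =ᵐ[lam] 0 := by
    filter_upwards [hx] with y hy
    simpa [Fintype.linearCombination_apply] using hy
  simpa [Fintype.linearCombination_apply] using hzero _ hux

/-- Well-definedness of the diagonal trace on finite sums of pure tensors: if
`Σ_i u_i(x) v_i(y) = 0` for `λ ⊗ λ`-a.e. `(x,y)`, then `Σ_i u_i(x) v_i(x) = 0` for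
`λ`-a.e. `x`. -/
theorem stmt_11 {D : Type*} [MeasurableSpace D] (lam : Measure D) [SigmaFinite lam]
    {n : ℕ} (hn : 1 ≤ n) (u v : Fin n → D → ℝ)
    (hu : ∀ i, MemLp (u i) 2 lam) (hv : ∀ i, MemLp (v i) 2 lam)
    (h : ∀ᵐ q ∂(lam.prod lam), ∑ i : Fin n, u i q.1 * v i q.2 = 0) :
    ∀ᵐ x ∂lam, ∑ i : Fin n, u i x * v i x = 0 :=
  stmt_11_general lam u v h
end
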